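/- arXiv:2302.03238 — 2 statements merged into one kernel-verified Lean document; each statement's English description precedes it below -/
import Mathlib

section
/- With Q = [[Γ⁻¹, V],[0, (1/β)I]] and M = [[I, ΓV],[0, I]], the matrix G := Qᵀ + Q − Mᵀ H M, where H = Q M⁻¹, equals the block diagonal matrix diag(Γ⁻¹, (1/β)I − V Γ V). Moreover, if the largest eigenvalue of V² is strictly less than 2 and 0 < β ≤ 1/(2 max_i τᵢ), then G is positive definite. -/
open Matrix

lemma posDef_fromBlocks_diag {m n : ℕ} {A : Matrix (Fin m) (Fin m) ℝ}
    {D : Matrix (Fin n) (Fin n) ℝ} (hA : A.PosDef) (hD : D.PosDef) :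
    (Matrix.fromBlocks A 0 0 D).PosDef := by
  rw [posDef_iff_dotProduct_mulVec]
  constructor
  · unfold Matrix.IsHermitian
    rw [conjTranspose_eq_transpose_of_trivial, fromBlocks_transpose, transpose_zero,
      transpose_zero, show Aᵀ = A from hA.1, show Dᵀ = D from hD.1]
  · intro x hx
    have hxe : x = Sum.elim (x ∘ Sum.inl) (x ∘ Sum.inr) := (Sum.elim_comp_inl_inr x).symm
    rw [hxe, fromBlocks_mulVec, Function.star_sumElim, sumElim_dotProduct_sumElim]
    simp only [zero_mulVec, add_zero, zero_add]
    have h1 := hA.posSemidef.dotProduct_mulVec_nonneg (x ∘ Sum.inl)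
    have h2 := hD.posSemidef.dotProduct_mulVec_nonneg (x ∘ Sum.inr)
    rcases (by
      by_contra h
      push_neg at h
      apply hx
      ext i
      cases i with
      | inl i => exact congrFun h.1 i
      | inr i => exact congrFun h.2 i : x ∘ Sum.inl ≠ 0 ∨ x ∘ Sum.inr ≠ 0) with h | h
    · exact add_pos_of_pos_of_nonneg (hA.dotProduct_mulVec_pos h) h2
    · exact add_pos_of_nonneg_of_pos h1 (hD.dotProduct_mulVec_pos h)

theorem G_block_diagonal_posdef {m : ℕ} [NeZero m] (d : Fin m → ℝ) (hd : ∀ i, 0 < d i)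
    (V : Matrix (Fin m) (Fin m) ℝ) (hV : V.IsSymm) (β : ℝ) (hβ : 0 < β) :
    let Γ : Matrix (Fin m) (Fin m) ℝ := Matrix.diagonal d
    let Q : Matrix (Fin m ⊕ Fin m) (Fin m ⊕ Fin m) ℝ :=
      Matrix.fromBlocks Γ⁻¹ V 0 (β⁻¹ • 1)
    let M : Matrix (Fin m ⊕ Fin m) (Fin m ⊕ Fin m) ℝ :=
      Matrix.fromBlocks 1 (Γ * V) 0 1
    let H := Q * M⁻¹
    let G := Qᵀ + Q - Mᵀ * H * M
    G = Matrix.fromBlocks Γ⁻¹ 0 0 (β⁻¹ • 1 - V * Γ * V) ∧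
      ((∀ x : Fin m → ℝ, x ≠ 0 → x ⬝ᵥ ((V * V) *ᵥ x) < 2 * (x ⬝ᵥ x)) →
        β ≤ 1 / (2 * Finset.univ.sup' Finset.univ_nonempty d) → G.PosDef) := by
  intro Γ Q M H G
  have hQ : Q = Matrix.fromBlocks Γ⁻¹ V 0 (β⁻¹ • 1) := rfl
  have hM : M = Matrix.fromBlocks 1 (Γ * V) 0 1 := rfl
  have hHdef : H = Q * M⁻¹ := rfl
  have hGdef : G = Qᵀ + Q - Mᵀ * H * M := rfl
  have hΓd : Γ = Matrix.diagonal d := rfl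
  have hΓ : Γ * Γ⁻¹ = 1 := by
    apply mul_nonsing_inv
    rw [hΓd, det_diagonal]
    exact IsUnit.mk0 _ (Finset.prod_ne_zero_iff.2 fun i _ => (hd i).ne')
  have hMinv : M⁻¹ = Matrix.fromBlocks 1 (-(Γ * V)) 0 1 := by
    apply inv_eq_right_inv
    rw [hM]
    simp [fromBlocks_multiply, fromBlocks_one]
  have hMinvM : M⁻¹ * M = 1 := by
    rw [hMinv, hM]
    simp [fromBlocks_multiply, fromBlocks_one]
  have htr : (Γ * V)ᵀ = V * Γ := by
    rw [transpose_mul, hV.eq, hΓd, diagonal_transpose]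
  have hMtQ : Mᵀ * Q = Matrix.fromBlocks Γ⁻¹ V V (V * Γ * V + β⁻¹ • 1) := by
    rw [hM, hQ, fromBlocks_transpose, fromBlocks_multiply]
    simp [htr, Matrix.mul_assoc, hΓ]
  have hQt : Qᵀ = Matrix.fromBlocks Γ⁻¹ 0 V (β⁻¹ • 1) := by
    rw [hQ, fromBlocks_transpose, transpose_nonsing_inv]
    rw [show Γᵀ = Γ by rw [hΓd, diagonal_transpose], hV.eq]
    congr 1 <;> simp
  have hG : G = Matrix.fromBlocks Γ⁻¹ 0 0 (β⁻¹ • 1 - V * Γ * V) := by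
    rw [hGdef, hHdef, Matrix.mul_assoc, Matrix.mul_assoc, hMinvM, Matrix.mul_one]
    rw [hMtQ, hQt, hQ]
    ext i j
    rcases i with i | i <;> rcases j with j | j <;>
      simp only [Matrix.sub_apply, Matrix.add_apply, fromBlocks_apply₁₁, fromBlocks_apply₁₂,
        fromBlocks_apply₂₁, fromBlocks_apply₂₂, Matrix.zero_apply] <;> abel
  refine ⟨hG, fun hV2 hβ2 => ?_⟩
  rw [hG]
  set τ : ℝ := Finset.univ.sup' Finset.univ_nonempty d with hτ
  have hτpos : 0 < τ := lt_of_lt_of_le (hd ⟨0, Nat.pos_of_ne_zero (NeZero.ne m)⟩)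
    (Finset.le_sup' d (Finset.mem_univ _))
  have hβinv : 2 * τ ≤ β⁻¹ := by
    rw [le_div_iff₀ (by positivity)] at hβ2
    rw [← one_div]
    rw [le_div_iff₀ hβ]
    linarith [hβ2]
  apply posDef_fromBlocks_diag
  · rw [show Γ⁻¹ = Matrix.diagonal (fun i => (d i)⁻¹) from inv_eq_right_inv (by
      rw [hΓd, diagonal_mul_diagonal, ← diagonal_one]
      ext i j
      by_cases h : i = j <;> simp [Matrix.diagonal_apply, h, mul_inv_cancel₀ (hd j).ne'])]
    exact .diagonal fun i => inv_pos.2 (hd i)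
  · rw [posDef_iff_dotProduct_mulVec]
    constructor
    · unfold Matrix.IsHermitian
      rw [conjTranspose_eq_transpose_of_trivial, transpose_sub, transpose_smul, transpose_one]
      rw [transpose_mul, transpose_mul, hV.eq, show Γᵀ = Γ by rw [hΓd, diagonal_transpose],
        Matrix.mul_assoc]
    · intro x hx
      have hstar : star x = x := by ext i; simp
      rw [hstar]
      have hy : x ᵥ* V = V *ᵥ x := by rw [← mulVec_transpose, hV.eq]
      set y : Fin m → ℝ := V *ᵥ x with hydef
      have key : x ⬝ᵥ ((V * Γ * V) *ᵥ x) = y ⬝ᵥ (Γ *ᵥ y) := by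
        rw [Matrix.mul_assoc, ← mulVec_mulVec, dotProduct_mulVec, hy, ← mulVec_mulVec]
      have h1 : y ⬝ᵥ (Γ *ᵥ y) ≤ τ * (y ⬝ᵥ y) := by
        rw [hΓd]
        simp only [dotProduct, mulVec_diagonal, Finset.mul_sum]
        apply Finset.sum_le_sum
        intro i _
        have : d i ≤ τ := Finset.le_sup' d (Finset.mem_univ i)
        nlinarith [sq_nonneg (y i)]
      have h2 : x ⬝ᵥ ((V * V) *ᵥ x) = y ⬝ᵥ y := by
        rw [← mulVec_mulVec, dotProduct_mulVec, hy]
      have h3 : x ⬝ᵥ ((V * V) *ᵥ x) < 2 * (x ⬝ᵥ x) := hV2 x hx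
      have hyy : 0 ≤ y ⬝ᵥ y := Finset.sum_nonneg fun i _ => mul_self_nonneg (y i)
      have hxx : 0 ≤ x ⬝ᵥ x := Finset.sum_nonneg fun i _ => mul_self_nonneg (x i)
      rw [sub_mulVec, dotProduct_sub, smul_mulVec, one_mulVec, dotProduct_smul, key]
      have : y ⬝ᵥ (Γ *ᵥ y) < β⁻¹ * (x ⬝ᵥ x) := by
        calc y ⬝ᵥ (Γ *ᵥ y) ≤ τ * (y ⬝ᵥ y) := h1
          _ = τ * (x ⬝ᵥ ((V * V) *ᵥ x)) := by rw [← h2]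
          _ < τ * (2 * (x ⬝ᵥ x)) := by exact mul_lt_mul_of_pos_left h3 hτpos
          _ = (2 * τ) * (x ⬝ᵥ x) := by ring
          _ ≤ β⁻¹ * (x ⬝ᵥ x) := by
              apply mul_le_mul_of_nonneg_right hβinv hxx
      simp only [smul_eq_mul]
      linarith
end

section
/- Let H be symmetric positive definite, M invertible, Q = HM, and G = Qᵀ + Q − Mᵀ H M. Then for any u, ũ with u⁺ := u − M(u − ũ): ‖u − ũ‖²_H − ‖u⁺ − ũ‖²_H = ‖u − ũ‖²_G. -/
open Matrix

theorem norm_difference_identity {n : ℕ} (H M : Matrix (Fin n) (Fin n) ℝ)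
    (hH : H.PosDef) (hM : IsUnit M) (u ut : Fin n → ℝ) :
    let Q := H * M
    let G := Qᵀ + Q - Mᵀ * H * M
    let up := u - M *ᵥ (u - ut)
    (u - ut) ⬝ᵥ (H *ᵥ (u - ut)) - (up - ut) ⬝ᵥ (H *ᵥ (up - ut))
      = (u - ut) ⬝ᵥ (G *ᵥ (u - ut)) := by
  intro Q G up
  have hup : up - ut = (u - ut) - M *ᵥ (u - ut) := by
    simp [up]; abel
  set v := u - ut with hv
  rw [hup]
  have hsym : Hᵀ = H := hH.1
  simp only [G, Q, mulVec_sub, mulVec_add, sub_mulVec, add_mulVec, dotProduct_sub,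
    dotProduct_add, sub_dotProduct, mulVec_mulVec, ← mulVec_mulVec, transpose_mul, hsym]
  have key : ∀ w : Fin n → ℝ, (M *ᵥ v) ⬝ᵥ (H *ᵥ w) = v ⬝ᵥ (Mᵀ *ᵥ (H *ᵥ w)) := by
    intro w
    simp [dotProduct_mulVec, ← vecMul_vecMul, vecMul_transpose]
  rw [key, key]
  ring
end
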